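/- Let 1 ≤ p, q < ∞, let 0 ≤ m < ∞, and for 0 ≤ n ≤ m let ν̃_n be positive regular Borel measures on [0,∞) each satisfying the Δ₂-condition, with ν_n := ν̃_n ⊗ λ. Let μ be a positive Borel measure on ℂ₊. If the embedding A^p(ℂ₊, (ν_n)_{n=0}^m) ↪ L^q(ℂ₊, μ) is bounded, i.e. there exists C′ > 0 with (∫_{ℂ₊} |F|^q dμ)^{1/q} ≤ C′ ‖F‖_{A^p(ℂ₊,(ν_n)_{n=0}^m)} for all F ∈ A^p(ℂ₊, (ν_n)_{n=0}^m), then there exists a constant C > 0 such that for every a ∈ ℂ₊, μ(Q(a)) ≤ C [ Σ_{n=0}^m ν_n(closure of Q(a)) / (Re(a))^{np} ]^{q/p}. -/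

import Mathlib

open MeasureTheory Set Complex Filter ENNReal

/-- The Laplace transform of `f : (0,∞) → ℂ` at `z`. -/
noncomputable def laplaceT (f : ℝ → ℂ) (z : ℂ) : ℂ :=
  ∫ t in Set.Ioi (0:ℝ), f t * Complex.exp (-(t : ℂ) * z)

/-- The norm of `f` in the weighted space `L^p_w(0,∞)` (as an extended real). -/
noncomputable def lpwNorm (p : ℝ) (w : ℝ → ℝ) (f : ℝ → ℂ) : ℝ≥0∞ :=
  (∫⁻ t in Set.Ioi (0:ℝ), (‖f t‖₊ : ℝ≥0∞) ^ p * ENNReal.ofReal (w t)) ^ (1/p)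

/-- Boundedness of the Laplace–Carleson embedding `𝔏 : L^p_w(0,∞) → L^q(ℂ₊, μ)`. -/
def lcBounded (p q : ℝ) (w : ℝ → ℝ) (μ : Measure ℂ) : Prop :=
  ∃ C > 0, ∀ f : ℝ → ℂ, Measurable f →
    (∫⁻ z, (‖laplaceT f z‖₊ : ℝ≥0∞) ^ q ∂μ) ^ (1/q) ≤ ENNReal.ofReal C * lpwNorm p w f

/-- The Carleson square `Q(a)` centred at `a ∈ ℂ₊`. -/
def carlesonQ (a : ℂ) : Set ℂ :=
  {z : ℂ | 0 ≤ z.re ∧ z.re < 2 * a.re ∧ |z.im - a.im| ≤ a.re}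

/-- The measure `ν = ν̃ ⊗ λ` on the closed right half-plane `[0,∞) × ℝ ≅ ℂ`,
where `λ` is Lebesgue measure. -/
noncomputable def prodMeasC (ν' : Measure ℝ) : Measure ℂ :=
  (ν'.prod volume).map Complex.measurableEquivRealProd.symm

/-- The `p`-th power of the Zen space norm `‖F‖_{A^p_ν}^p = sup_{ε>0} ∫ |F(z+ε)|^p dν`. -/
noncomputable def zenNormPow (p : ℝ) (ν : Measure ℂ) (F : ℂ → ℂ) : ℝ≥0∞ :=
  ⨆ (ε : ℝ) (_ : 0 < ε), ∫⁻ z, (‖F (z + (ε : ℂ))‖₊ : ℝ≥0∞) ^ p ∂ν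

/-- The `p`-th power of the norm of `A^p(ℂ₊, (ν_n)_{n=0}^m)`:
`‖F‖^p = Σ_{n=0}^m ‖F^{(n)}‖_{A^p_{ν_n}}^p`. -/
noncomputable def apNormPow (p : ℝ) (m : ℕ) (ν : ℕ → Measure ℂ) (F : ℂ → ℂ) : ℝ≥0∞ :=
  ∑ n ∈ Finset.range (m + 1), zenNormPow p (ν n) (iteratedDeriv n F)


/-!
Test the embedding on `F(z) = (Re a)^M (z + ā)^{-M}`. On `Q(a)` one has `|z + ā| ≤ 4 Re a`, so
`|F| ≥ 4^{-M}` there and `μ(Q(a)) ≤ 4^{Mq} ∫ |F|^q dμ`. On the other side,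
`|F^{(n)}(z)| ≲ (Re a)^M (Re z + Re a + |Im z - Im a|)^{-(M+n)}`. Cut the half-plane into dyadic
shells of this gauge: by the Δ₂-condition (constant `R`) the `k`-th shell has `ν_n`-measure at most
`R^k 2^{k+2} Re a · ν̃_n[0, 2 Re a)`, so once `2^M ≥ 4R` the shell contributions decay geometrically
and `‖F^{(n)}‖^p_{A^p_{ν_n}} ≲ (Re a)^{-np} ν_n(Q(a))`.
-/

lemma exists_forall_of_monotone {α : Type*} [SemilatticeSup α] {P : ℕ → α → Prop}
    (hP : ∀ n, Monotone (P n)) {m : ℕ} (h : ∀ n ≤ m, ∃ x, P n x) : ∃ x, ∀ n ≤ m, P n x := by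
  induction m with
  | zero =>
    obtain ⟨x, hx⟩ := h 0 le_rfl
    exact ⟨x, fun n hn => by rwa [Nat.le_zero.1 hn]⟩
  | succ m ih =>
    obtain ⟨x, hx⟩ := ih fun n hn => h n (hn.trans m.le_succ)
    obtain ⟨y, hy⟩ := h (m + 1) le_rfl
    refine ⟨x ⊔ y, fun n hn => ?_⟩
    rcases Nat.of_le_succ hn with hn | rfl
    · exact hP n le_sup_left (hx n hn)
    · exact hP _ le_sup_right hy

lemma prodMeasC_reProdIm (ν' : Measure ℝ) (s t : Set ℝ) :
    prodMeasC ν' (s ×ℂ t) = ν' s * volume t := by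
  rw [prodMeasC, MeasurableEquiv.map_apply, ← Measure.prod_prod]
  rfl

lemma carlesonQ_eq_reProdIm (a : ℂ) :
    carlesonQ a = Ico 0 (2 * a.re) ×ℂ Icc (a.im - a.re) (a.im + a.re) := by
  ext z
  simp only [carlesonQ, mem_reProdIm, mem_ofPred_eq, mem_Ico, mem_Icc, abs_sub_le_iff]
  constructor
  · rintro ⟨h₀, h₁, h₂, h₃⟩
    exact ⟨⟨h₀, h₁⟩, by linarith, by linarith⟩
  · rintro ⟨⟨h₀, h₁⟩, h₂, h₃⟩
    exact ⟨h₀, h₁, by linarith, by linarith⟩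

lemma measurableSet_carlesonQ (a : ℂ) : MeasurableSet (carlesonQ a) := by
  rw [carlesonQ_eq_reProdIm]
  exact (measurable_re measurableSet_Ico).inter (measurable_im measurableSet_Icc)

lemma measure_Ico_mul_le_prodMeasC_closure_carlesonQ (ν' : Measure ℝ) (a : ℂ) :
    ν' (Ico 0 (2 * a.re)) * ENNReal.ofReal (2 * a.re) ≤
      prodMeasC ν' (closure (carlesonQ a)) := by
  calc ν' (Ico 0 (2 * a.re)) * ENNReal.ofReal (2 * a.re) = prodMeasC ν' (carlesonQ a) := by
        rw [carlesonQ_eq_reProdIm, prodMeasC_reProdIm, Real.volume_Icc]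
        ring_nf
    _ ≤ prodMeasC ν' (closure (carlesonQ a)) := measure_mono subset_closure

def IsDeltaTwoWith (ν' : Measure ℝ) (R : ℝ) : Prop :=
  ∀ r > 0, ν' (Ico 0 (2 * r)) ≤ ENNReal.ofReal R * ν' (Ico 0 r)

lemma IsDeltaTwoWith.measure_Ico_two_pow_mul_le {ν' : Measure ℝ} {R : ℝ}
    (hdbl : IsDeltaTwoWith ν' R) (k : ℕ) {u : ℝ} (hu : 0 < u) :
    ν' (Ico 0 (2 ^ k * u)) ≤ ENNReal.ofReal R ^ k * ν' (Ico 0 u) := by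
  induction k generalizing u with
  | zero => simp
  | succ k ih =>
    calc ν' (Ico 0 (2 ^ (k + 1) * u)) = ν' (Ico 0 (2 ^ k * (2 * u))) := by ring_nf
      _ ≤ ENNReal.ofReal R ^ k * ν' (Ico 0 (2 * u)) := ih (by positivity)
      _ ≤ ENNReal.ofReal R ^ k * (ENNReal.ofReal R * ν' (Ico 0 u)) := by gcongr; exact hdbl u hu
      _ = ENNReal.ofReal R ^ (k + 1) * ν' (Ico 0 u) := by ring

def dyadicShell (r y : ℝ) (k : ℕ) : Set ℂ :=
  {z | 0 ≤ z.re ∧ z.re + r + |z.im - y| ∈ Ico (2 ^ k * r) (2 ^ (k + 1) * r)}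

lemma setOf_re_nonneg_subset_iUnion_dyadicShell {r : ℝ} (hr : 0 < r) (y : ℝ) :
    {z : ℂ | 0 ≤ z.re} ⊆ ⋃ k, dyadicShell r y k := by
  intro z (hz : 0 ≤ z.re)
  have h₁ : 1 ≤ (z.re + r + |z.im - y|) / r := by
    rw [le_div_iff₀ hr]
    linarith [abs_nonneg (z.im - y)]
  obtain ⟨k, hk₁, hk₂⟩ := exists_nat_pow_near h₁ one_lt_two
  exact mem_iUnion.2 ⟨k, hz, (le_div_iff₀ hr).1 hk₁, (div_lt_iff₀ hr).1 hk₂⟩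

lemma IsDeltaTwoWith.prodMeasC_dyadicShell_le {ν' : Measure ℝ} {R : ℝ} (hR : 0 ≤ R)
    (hdbl : IsDeltaTwoWith ν' R) {r : ℝ} (hr : 0 < r) (y : ℝ) (k : ℕ) :
    prodMeasC ν' (dyadicShell r y k) ≤
      ENNReal.ofReal (R ^ k * (2 ^ (k + 2) * r)) * ν' (Ico 0 (2 * r)) := by
  have hsub : dyadicShell r y k ⊆
      Ico 0 (2 ^ k * (2 * r)) ×ℂ Ioo (y - 2 ^ (k + 1) * r) (y + 2 ^ (k + 1) * r) := by
    rintro z ⟨hz, -, hzk⟩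
    have him := abs_sub_lt_iff.1 (show |z.im - y| < 2 ^ (k + 1) * r by linarith)
    have h2k : (2 : ℝ) ^ k * (2 * r) = 2 ^ (k + 1) * r := by ring
    refine ⟨⟨hz, ?_⟩, ?_, ?_⟩ <;> linarith [abs_nonneg (z.im - y)]
  calc prodMeasC ν' (dyadicShell r y k)
      ≤ ν' (Ico 0 (2 ^ k * (2 * r))) * ENNReal.ofReal (2 ^ (k + 2) * r) := by
        refine (measure_mono hsub).trans_eq ?_
        rw [prodMeasC_reProdIm, Real.volume_Ioo]
        ring_nf
    _ ≤ ENNReal.ofReal R ^ k * ν' (Ico 0 (2 * r)) * ENNReal.ofReal (2 ^ (k + 2) * r) := by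
        gcongr
        exact hdbl.measure_Ico_two_pow_mul_le k (by positivity)
    _ = ENNReal.ofReal (R ^ k * (2 ^ (k + 2) * r)) * ν' (Ico 0 (2 * r)) := by
        rw [ENNReal.ofReal_mul (pow_nonneg hR k), ENNReal.ofReal_pow hR]
        ring

lemma mul_two_pow_mul_rpow_neg_mul_le {A R r s : ℝ} (hA : 0 ≤ A) (hR : 0 ≤ R) (hr : 0 < r)
    (hs : 4 * R ≤ 2 ^ s) (k : ℕ) :
    A * (2 ^ k * r) ^ (-s) * (R ^ k * (2 ^ (k + 2) * r)) ≤ 4 * A * r ^ (1 - s) * (1 / 2) ^ k := by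
  have h2s : (0 : ℝ) < 2 ^ s := by positivity
  have hsplit : (2 ^ k * r) ^ (-s) = r ^ (-s) / (2 ^ s) ^ k := by
    rw [Real.mul_rpow (by positivity) hr.le, ← Real.rpow_natCast, ← Real.rpow_natCast,
      ← Real.rpow_mul zero_le_two, ← Real.rpow_mul zero_le_two, mul_neg,
      Real.rpow_neg (by positivity), mul_comm s]
    field_simp
  have hratio : 2 * R / 2 ^ s ≤ 1 / 2 := by
    rw [div_le_iff₀ h2s]
    linarith
  calc A * (2 ^ k * r) ^ (-s) * (R ^ k * (2 ^ (k + 2) * r))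
      = 4 * A * r ^ (1 - s) * (2 * R / 2 ^ s) ^ k := by
        rw [hsplit, sub_eq_neg_add, Real.rpow_add hr, Real.rpow_one, div_pow, mul_pow]
        field_simp
        ring
    _ ≤ 4 * A * r ^ (1 - s) * (1 / 2) ^ k := by gcongr

theorem lintegral_prodMeasC_le_of_le_rpow_neg {ν' : Measure ℝ} (hsupp : ν' (Iio 0) = 0)
    {R : ℝ} (hR : 0 ≤ R) (hdbl : IsDeltaTwoWith ν' R) {s : ℝ} (hs₀ : 0 ≤ s) (hs : 4 * R ≤ 2 ^ s)
    {r : ℝ} (hr : 0 < r) (y : ℝ) {A : ℝ} (hA : 0 ≤ A) {g : ℂ → ℝ≥0∞}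
    (hg : ∀ z : ℂ, 0 ≤ z.re → g z ≤ ENNReal.ofReal (A * (z.re + r + |z.im - y|) ^ (-s))) :
    ∫⁻ z, g z ∂prodMeasC ν' ≤ ENNReal.ofReal (8 * A * r ^ (1 - s)) * ν' (Ico 0 (2 * r)) := by
  set V := ν' (Ico 0 (2 * r))
  have hae : ∀ᵐ z ∂prodMeasC ν', z ∈ {z : ℂ | 0 ≤ z.re} := by
    have hcompl : {z : ℂ | 0 ≤ z.re}ᶜ = Iio 0 ×ℂ univ := by
      ext z
      simp [mem_reProdIm]
    rw [ae_iff, ← compl_def, hcompl, prodMeasC_reProdIm, hsupp, zero_mul]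
  have hshell : ∀ k, ∫⁻ z in dyadicShell r y k, g z ∂prodMeasC ν' ≤
      ENNReal.ofReal (4 * A * r ^ (1 - s)) * V * 2⁻¹ ^ k := by
    intro k
    have hgk : ∀ z ∈ dyadicShell r y k, g z ≤ ENNReal.ofReal (A * (2 ^ k * r) ^ (-s)) :=
      fun z hz => (hg z hz.1).trans <| ENNReal.ofReal_le_ofReal <| mul_le_mul_of_nonneg_left
        (Real.rpow_le_rpow_of_nonpos (by positivity) hz.2.1 (neg_nonpos.2 hs₀)) hA
    calc ∫⁻ z in dyadicShell r y k, g z ∂prodMeasC ν'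
        ≤ ENNReal.ofReal (A * (2 ^ k * r) ^ (-s)) * prodMeasC ν' (dyadicShell r y k) :=
          (setLIntegral_mono measurable_const hgk).trans_eq (setLIntegral_const _ _)
      _ ≤ ENNReal.ofReal (A * (2 ^ k * r) ^ (-s)) *
            (ENNReal.ofReal (R ^ k * (2 ^ (k + 2) * r)) * V) := by
          gcongr
          exact hdbl.prodMeasC_dyadicShell_le hR hr y k
      _ ≤ ENNReal.ofReal (4 * A * r ^ (1 - s) * (1 / 2) ^ k) * V := by
          rw [← mul_assoc, ← ENNReal.ofReal_mul (by positivity)]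
          refine mul_le_mul_left (ENNReal.ofReal_le_ofReal ?_) V
          exact mul_two_pow_mul_rpow_neg_mul_le hA hR hr hs k
      _ = ENNReal.ofReal (4 * A * r ^ (1 - s)) * V * 2⁻¹ ^ k := by
          rw [ENNReal.ofReal_mul (by positivity), ENNReal.ofReal_pow (by norm_num), one_div,
            ENNReal.ofReal_inv_of_pos two_pos, ENNReal.ofReal_ofNat]
          ring
  calc ∫⁻ z, g z ∂prodMeasC ν' = ∫⁻ z in {z : ℂ | 0 ≤ z.re}, g z ∂prodMeasC ν' := by
        rw [Measure.restrict_eq_self_of_ae_mem hae]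
    _ ≤ ∫⁻ z in ⋃ k, dyadicShell r y k, g z ∂prodMeasC ν' :=
        lintegral_mono_set (setOf_re_nonneg_subset_iUnion_dyadicShell hr y)
    _ ≤ ∑' k, ∫⁻ z in dyadicShell r y k, g z ∂prodMeasC ν' := lintegral_iUnion_le _ _
    _ ≤ ∑' k : ℕ, ENNReal.ofReal (4 * A * r ^ (1 - s)) * V * 2⁻¹ ^ k := ENNReal.tsum_le_tsum hshell
    _ = ENNReal.ofReal (8 * A * r ^ (1 - s)) * V := by
        rw [ENNReal.tsum_mul_left, ENNReal.tsum_geometric, ENNReal.one_sub_inv_two, inv_inv,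
          show (8 : ℝ) * A * r ^ (1 - s) = 4 * A * r ^ (1 - s) * 2 by ring,
          ENNReal.ofReal_mul (by positivity : (0 : ℝ) ≤ 4 * A * r ^ (1 - s)), ENNReal.ofReal_ofNat]
        ring

open ComplexConjugate

lemma norm_iteratedDeriv_add_const_zpow_neg (b : ℂ) (M n : ℕ) (z : ℂ) :
    ‖iteratedDeriv n (fun w : ℂ => (w + b) ^ (-(M : ℤ))) z‖ =
      M.ascFactorial n / ‖z + b‖ ^ (M + n) := by
  rw [iteratedDeriv_comp_add_const n (fun w : ℂ => w ^ (-(M : ℤ))), iteratedDeriv_eq_iterate]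
  beta_reduce
  rw [iter_deriv_zpow, norm_mul, norm_zpow, norm_prod, Nat.ascFactorial_eq_prod_range,
    show -(M : ℤ) - n = -((M + n : ℕ) : ℤ) by push_cast; ring, zpow_neg, zpow_natCast,
    div_eq_mul_inv]
  push_cast
  congr 1
  refine Finset.prod_congr rfl fun i _ => ?_
  rw [show -(M : ℂ) - i = -((M + i : ℝ) : ℂ) by push_cast; ring, norm_neg,
    Complex.norm_real, Real.norm_of_nonneg (by positivity)]

noncomputable def carlesonTestFn (a : ℂ) (M : ℕ) (z : ℂ) : ℂ :=
  (a.re : ℂ) ^ M * (z + conj a) ^ (-(M : ℤ))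

lemma re_add_abs_im_sub_le_two_mul_norm (a z : ℂ) {ε : ℝ} (hε : 0 ≤ ε) :
    z.re + a.re + |z.im - a.im| ≤ 2 * ‖z + ε + conj a‖ := by
  have hre := Complex.re_le_norm (z + ε + conj a)
  have him := Complex.abs_im_le_norm (z + ε + conj a)
  simp only [add_re, add_im, ofReal_re, ofReal_im, conj_re, conj_im, add_zero] at hre him
  rw [← sub_eq_add_neg] at him
  linarith

lemma norm_iteratedDeriv_carlesonTestFn_le {a : ℂ} (ha : 0 < a.re) (M n : ℕ) {z : ℂ}
    (hz : 0 ≤ z.re) {ε : ℝ} (hε : 0 ≤ ε) :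
    ‖iteratedDeriv n (carlesonTestFn a M) (z + ε)‖ ≤
      a.re ^ M * (M.ascFactorial n * 2 ^ (M + n)) / (z.re + a.re + |z.im - a.im|) ^ (M + n) := by
  unfold carlesonTestFn
  rw [iteratedDeriv_const_mul_field, norm_mul,
    norm_iteratedDeriv_add_const_zpow_neg, norm_pow, Complex.norm_real, Real.norm_of_nonneg ha.le,
    mul_div_assoc, ← div_div_eq_mul_div, ← div_pow]
  gcongr
  linarith [re_add_abs_im_sub_le_two_mul_norm a z hε]

lemma zenNormPow_iteratedDeriv_carlesonTestFn_le {p : ℝ} (hp : 1 ≤ p) {ν' : Measure ℝ}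
    (hsupp : ν' (Iio 0) = 0) {R : ℝ} (hR : 0 ≤ R) (hdbl : IsDeltaTwoWith ν' R) {M : ℕ}
    (hM : 4 * R ≤ 2 ^ M) {a : ℂ} (ha : 0 < a.re) (n : ℕ) :
    zenNormPow p (prodMeasC ν') (iteratedDeriv n (carlesonTestFn a M)) ≤
      ENNReal.ofReal (8 * (M.ascFactorial n * 2 ^ (M + n)) ^ p * a.re ^ (1 - n * p)) *
        ν' (Ico 0 (2 * a.re)) := by
  set c : ℝ := M.ascFactorial n * 2 ^ (M + n)
  set s : ℝ := (M + n : ℕ) * p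
  have hp₀ : 0 < p := by linarith
  have hs : 4 * R ≤ 2 ^ s := by
    refine hM.trans ?_
    rw [← Real.rpow_natCast]
    refine Real.rpow_le_rpow_of_exponent_le one_le_two (?_ : (M : ℝ) ≤ (M + n : ℕ) * p)
    push_cast
    nlinarith [(n.cast_nonneg : (0 : ℝ) ≤ n), (M.cast_nonneg : (0 : ℝ) ≤ M)]
  have hpow : (a.re ^ M * c) ^ p * a.re ^ (1 - s) = c ^ p * a.re ^ (1 - n * p) := by
    rw [Real.mul_rpow (by positivity) (by positivity), ← Real.rpow_natCast,
      ← Real.rpow_mul ha.le, mul_right_comm, ← Real.rpow_add ha, mul_comm]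
    congr 2
    simp only [s]
    push_cast
    ring
  refine iSup₂_le fun ε hε => ?_
  calc ∫⁻ z, (‖iteratedDeriv n (carlesonTestFn a M) (z + ε)‖₊ : ℝ≥0∞) ^ p ∂prodMeasC ν'
      ≤ ENNReal.ofReal (8 * (a.re ^ M * c) ^ p * a.re ^ (1 - s)) * ν' (Ico 0 (2 * a.re)) := by
        refine lintegral_prodMeasC_le_of_le_rpow_neg hsupp hR hdbl (by positivity) hs ha a.im
          (by positivity) fun z hz => ?_
        set t := z.re + a.re + |z.im - a.im|
        have ht : 0 < t := by positivity
        rw [← enorm_eq_nnnorm, ← ofReal_norm, ENNReal.ofReal_rpow_of_nonneg (norm_nonneg _) hp₀.le]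
        refine ENNReal.ofReal_le_ofReal ((Real.rpow_le_rpow (norm_nonneg _)
          (norm_iteratedDeriv_carlesonTestFn_le ha M n hz hε.le) hp₀.le).trans_eq ?_)
        rw [Real.div_rpow (by positivity) (by positivity), ← Real.rpow_natCast t,
          ← Real.rpow_mul ht.le, Real.rpow_neg ht.le, div_eq_mul_inv]
    _ = ENNReal.ofReal (8 * c ^ p * a.re ^ (1 - n * p)) * ν' (Ico 0 (2 * a.re)) := by
        rw [mul_assoc 8, hpow, ← mul_assoc]

lemma apNormPow_carlesonTestFn_le {p : ℝ} (hp : 1 ≤ p) {m : ℕ} {ν' : ℕ → Measure ℝ}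
    (hsupp : ∀ n ≤ m, ν' n (Iio 0) = 0) {R : ℝ} (hR : 0 ≤ R)
    (hdbl : ∀ n ≤ m, IsDeltaTwoWith (ν' n) R) {M : ℕ} (hM : 4 * R ≤ 2 ^ M) {K : ℝ}
    (hK : ∀ n ≤ m, 4 * ((M.ascFactorial n : ℝ) * 2 ^ (M + n)) ^ p ≤ K) {a : ℂ} (ha : 0 < a.re) :
    apNormPow p m (fun n => prodMeasC (ν' n)) (carlesonTestFn a M) ≤
      ENNReal.ofReal K * ∑ n ∈ Finset.range (m + 1),
        prodMeasC (ν' n) (closure (carlesonQ a)) / ENNReal.ofReal (a.re ^ ((n : ℝ) * p)) := by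
  rw [apNormPow, Finset.mul_sum]
  refine Finset.sum_le_sum fun n hn => ?_
  have hnm : n ≤ m := Nat.lt_succ_iff.1 (Finset.mem_range.1 hn)
  set c : ℝ := ((M.ascFactorial n : ℝ) * 2 ^ (M + n)) ^ p
  have hrn : 0 < a.re ^ ((n : ℝ) * p) := by positivity
  have hexp : 8 * c * a.re ^ (1 - n * p) = 4 * c * (2 * a.re) * (a.re ^ ((n : ℝ) * p))⁻¹ := by
    rw [sub_eq_add_neg, Real.rpow_add ha, Real.rpow_one, Real.rpow_neg ha.le]
    ring
  calc zenNormPow p (prodMeasC (ν' n)) (iteratedDeriv n (carlesonTestFn a M))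
      ≤ ENNReal.ofReal (8 * c * a.re ^ (1 - n * p)) * ν' n (Ico 0 (2 * a.re)) :=
        zenNormPow_iteratedDeriv_carlesonTestFn_le hp (hsupp n hnm) hR (hdbl n hnm) hM ha n
    _ = ENNReal.ofReal (4 * c) *
          (ν' n (Ico 0 (2 * a.re)) * ENNReal.ofReal (2 * a.re) /
            ENNReal.ofReal (a.re ^ ((n : ℝ) * p))) := by
        rw [hexp, ENNReal.ofReal_mul (by positivity), ENNReal.ofReal_mul (by positivity),
          ENNReal.ofReal_inv_of_pos hrn, div_eq_mul_inv]
        ring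
    _ ≤ ENNReal.ofReal K *
          (prodMeasC (ν' n) (closure (carlesonQ a)) / ENNReal.ofReal (a.re ^ ((n : ℝ) * p))) := by
        gcongr
        · exact hK n hnm
        · exact measure_Ico_mul_le_prodMeasC_closure_carlesonQ (ν' n) a

lemma add_conj_ne_zero {a z : ℂ} (ha : 0 < a.re) (hz : 0 ≤ z.re) : z + conj a ≠ 0 := by
  intro h
  have := congrArg re h
  simp only [add_re, conj_re, zero_re] at this
  linarith

lemma differentiableOn_carlesonTestFn {a : ℂ} (ha : 0 < a.re) (M : ℕ) :
    DifferentiableOn ℂ (carlesonTestFn a M) {z : ℂ | 0 < z.re} := fun z hz =>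
  ((differentiableAt_zpow.2 (Or.inl (add_conj_ne_zero ha (le_of_lt hz)))).comp z
    (differentiableAt_id.add_const _)).const_mul _ |>.differentiableWithinAt

lemma norm_add_conj_le_of_mem_carlesonQ {a z : ℂ} (hz : z ∈ carlesonQ a) :
    ‖z + conj a‖ ≤ 4 * a.re := by
  obtain ⟨h₀, h₁, h₂⟩ := hz
  calc ‖z + conj a‖ ≤ |(z + conj a).re| + |(z + conj a).im| := norm_le_abs_re_add_abs_im _
    _ ≤ 4 * a.re := by
        simp only [add_re, add_im, conj_re, conj_im, ← sub_eq_add_neg]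
        rw [abs_of_nonneg (by linarith)]
        linarith

lemma one_le_four_pow_mul_norm_carlesonTestFn {a z : ℂ} (ha : 0 < a.re) (M : ℕ)
    (hz : z ∈ carlesonQ a) : 1 ≤ 4 ^ M * ‖carlesonTestFn a M z‖ := by
  have hw : 0 < ‖z + conj a‖ := norm_pos_iff.2 (add_conj_ne_zero ha hz.1)
  rw [carlesonTestFn, norm_mul, norm_zpow, zpow_neg, zpow_natCast, norm_pow, Complex.norm_real,
    Real.norm_of_nonneg ha.le, ← mul_assoc, ← mul_pow, ← div_eq_mul_inv, ← div_pow]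
  exact one_le_pow₀ ((one_le_div hw).2 (by linarith [norm_add_conj_le_of_mem_carlesonQ hz]))

lemma measure_carlesonQ_le_lintegral_carlesonTestFn (μ : Measure ℂ) {q : ℝ} (hq : 0 ≤ q)
    {a : ℂ} (ha : 0 < a.re) (M : ℕ) :
    μ (carlesonQ a) ≤
      ENNReal.ofReal (((4 : ℝ) ^ M) ^ q) * ∫⁻ z, (‖carlesonTestFn a M z‖₊ : ℝ≥0∞) ^ q ∂μ := by
  have hpt : ∀ z ∈ carlesonQ a,
      1 ≤ ENNReal.ofReal (((4 : ℝ) ^ M) ^ q) * (‖carlesonTestFn a M z‖₊ : ℝ≥0∞) ^ q := by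
    intro z hz
    rw [← enorm_eq_nnnorm, ← ofReal_norm, ENNReal.ofReal_rpow_of_nonneg (norm_nonneg _) hq,
      ← ENNReal.ofReal_mul (by positivity), ← Real.mul_rpow (by positivity) (norm_nonneg _)]
    exact ENNReal.one_le_ofReal.2
      (Real.one_le_rpow (one_le_four_pow_mul_norm_carlesonTestFn ha M hz) hq)
  calc μ (carlesonQ a) = ∫⁻ _ in carlesonQ a, 1 ∂μ := (setLIntegral_one _).symm
    _ ≤ ∫⁻ z in carlesonQ a,
          ENNReal.ofReal (((4 : ℝ) ^ M) ^ q) * (‖carlesonTestFn a M z‖₊ : ℝ≥0∞) ^ q ∂μ :=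
        setLIntegral_mono' (measurableSet_carlesonQ a) hpt
    _ = ENNReal.ofReal (((4 : ℝ) ^ M) ^ q) *
          ∫⁻ z in carlesonQ a, (‖carlesonTestFn a M z‖₊ : ℝ≥0∞) ^ q ∂μ :=
        lintegral_const_mul' _ _ ENNReal.ofReal_ne_top
    _ ≤ ENNReal.ofReal (((4 : ℝ) ^ M) ^ q) * ∫⁻ z, (‖carlesonTestFn a M z‖₊ : ℝ≥0∞) ^ q ∂μ := by
        gcongr
        exact Measure.restrict_le_self

theorem carleson_square_bound_of_ap_embedding_bounded_general
    (p q : ℝ) (hp : 1 ≤ p) (hq : 1 ≤ q) (m : ℕ)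
    (ν' : ℕ → Measure ℝ)
    (hsupp : ∀ n ≤ m, ν' n {x : ℝ | x < 0} = 0)
    (hΔ₂ : ∀ n ≤ m, ∃ R : ℝ, 0 ≤ R ∧
      ∀ r > 0, ν' n (Set.Ico 0 (2 * r)) ≤ ENNReal.ofReal R * ν' n (Set.Ico 0 r))
    (μ : Measure ℂ)
    (hbdd : ∃ C' > 0, ∀ F : ℂ → ℂ, DifferentiableOn ℂ F {z : ℂ | 0 < z.re} →
      (∫⁻ z, (‖F z‖₊ : ℝ≥0∞) ^ q ∂μ) ^ (1/q) ≤
        ENNReal.ofReal C' * (apNormPow p m (fun n => prodMeasC (ν' n)) F) ^ (1/p)) :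
    ∃ C > 0, ∀ a : ℂ, 0 < a.re →
      μ (carlesonQ a) ≤ ENNReal.ofReal C *
        (∑ n ∈ Finset.range (m + 1),
          prodMeasC (ν' n) (closure (carlesonQ a)) /
            ENNReal.ofReal (a.re ^ ((n : ℝ) * p))) ^ (q/p) := by
  obtain ⟨C', hC', hemb⟩ := hbdd
  have hq₀ : 0 < q := by linarith
  obtain ⟨R, hR⟩ := exists_forall_of_monotone (P := fun n R => 0 ≤ R ∧ IsDeltaTwoWith (ν' n) R)
    (fun n R R' hRR' hR => ⟨hR.1.trans hRR', fun r hr => (hR.2 r hr).trans (by gcongr)⟩) hΔ₂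
  obtain ⟨M, hM⟩ := pow_unbounded_of_one_lt (4 * R) one_lt_two
  obtain ⟨K, hK⟩ := exists_forall_of_monotone
    (P := fun n K => 4 * ((M.ascFactorial n : ℝ) * 2 ^ (M + n)) ^ p ≤ K)
    (fun n _ _ hKK' hK => hK.trans hKK') (m := m) fun n _ => ⟨_, le_rfl⟩
  have hK₀ : 0 < K := lt_of_lt_of_le (by rw [Nat.ascFactorial_zero]; positivity) (hK 0 m.zero_le)
  refine ⟨((4 : ℝ) ^ M) ^ q * C' ^ q * K ^ (q / p), by positivity, fun a ha => ?_⟩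
  set B := ∑ n ∈ Finset.range (m + 1),
    prodMeasC (ν' n) (closure (carlesonQ a)) / ENNReal.ofReal (a.re ^ ((n : ℝ) * p))
  calc μ (carlesonQ a)
      ≤ ENNReal.ofReal (((4 : ℝ) ^ M) ^ q) * ∫⁻ z, (‖carlesonTestFn a M z‖₊ : ℝ≥0∞) ^ q ∂μ :=
        measure_carlesonQ_le_lintegral_carlesonTestFn μ hq₀.le ha M
    _ ≤ ENNReal.ofReal (((4 : ℝ) ^ M) ^ q) * (ENNReal.ofReal C' *
          (apNormPow p m (fun n => prodMeasC (ν' n)) (carlesonTestFn a M)) ^ (1 / p)) ^ q := by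
        gcongr
        rw [← ENNReal.rpow_inv_le_iff hq₀, ← one_div]
        exact hemb _ (differentiableOn_carlesonTestFn ha M)
    _ ≤ ENNReal.ofReal (((4 : ℝ) ^ M) ^ q) *
          (ENNReal.ofReal C' * (ENNReal.ofReal K * B) ^ (1 / p)) ^ q := by
        gcongr
        exact apNormPow_carlesonTestFn_le hp hsupp (hR 0 m.zero_le).1 (fun n hn => (hR n hn).2)
          hM.le hK ha
    _ = ENNReal.ofReal (((4 : ℝ) ^ M) ^ q * C' ^ q * K ^ (q / p)) * B ^ (q / p) := by
        rw [ENNReal.mul_rpow_of_nonneg _ _ hq₀.le, ← ENNReal.rpow_mul, one_div_mul_eq_div,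
          ENNReal.mul_rpow_of_nonneg _ _ (by positivity),
          ENNReal.ofReal_rpow_of_nonneg hC'.le hq₀.le,
          ENNReal.ofReal_rpow_of_nonneg hK₀.le (by positivity), ENNReal.ofReal_mul (by positivity),
          ENNReal.ofReal_mul (by positivity)]
        ring

/-- if the embedding `A^p(ℂ₊,(ν_n)_{n=0}^m) ↪ L^q(ℂ₊,μ)` is bounded,
then `μ(Q(a)) ≤ C [Σ_{n=0}^m ν_n(closure Q(a))/(Re a)^{np}]^{q/p}` for all `a ∈ ℂ₊`. -/
theorem carleson_square_bound_of_ap_embedding_bounded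
    (p q : ℝ) (hp : 1 ≤ p) (hq : 1 ≤ q) (m : ℕ)
    (ν' : ℕ → Measure ℝ) (hreg : ∀ n ≤ m, (ν' n).Regular)
    (hsupp : ∀ n ≤ m, ν' n {x : ℝ | x < 0} = 0)
    (hΔ₂ : ∀ n ≤ m, ∃ R : ℝ, 0 ≤ R ∧
      ∀ r > 0, ν' n (Set.Ico 0 (2 * r)) ≤ ENNReal.ofReal R * ν' n (Set.Ico 0 r))
    (μ : Measure ℂ)
    (hbdd : ∃ C' > 0, ∀ F : ℂ → ℂ, DifferentiableOn ℂ F {z : ℂ | 0 < z.re} →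
      (∫⁻ z, (‖F z‖₊ : ℝ≥0∞) ^ q ∂μ) ^ (1/q) ≤
        ENNReal.ofReal C' * (apNormPow p m (fun n => prodMeasC (ν' n)) F) ^ (1/p)) :
    ∃ C > 0, ∀ a : ℂ, 0 < a.re →
      μ (carlesonQ a) ≤ ENNReal.ofReal C *
        (∑ n ∈ Finset.range (m + 1),
          prodMeasC (ν' n) (closure (carlesonQ a)) /
            ENNReal.ofReal (a.re ^ ((n : ℝ) * p))) ^ (q/p) :=
  carleson_square_bound_of_ap_embedding_bounded_general p q hp hq m ν' hsupp hΔ₂ μ hbdd
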